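/- arXiv:2310.11214 — 3 statements merged into one kernel-verified Lean document; each statement's English description precedes it below -/
import Mathlib

section
/- For every b > 0 and every t ∈ ℝ, the sum over k ∈ ℤ of exp(-(π/b)(t-k)²) is at most √b · θ₃(0, e^{-bπ}), where θ₃(0,q) = Σ_{k∈ℤ} q^{k²}. -/
/-!
By Poisson summation, the periodized Gaussian `∑ₖ exp (-(π/b)(t-k)²)` equals
`√b · ∑ₙ exp (-bπn²) e^{2πint}`, i.e. `√b` times the Jacobi theta function `θ(t, ib)`.
Bounding each Fourier coefficient by its modulus removes the phases `e^{2πint}` and leaves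
`√b · θ(0, ib) = √b · θ₃(0, e^{-bπ})`.
-/

open Real

open Complex in
theorem ofReal_tsum_exp_neg_div_mul_sub_sq {b : ℝ} (hb : 0 < b) (t : ℝ) :
    ((∑' k : ℤ, rexp (-(π / b) * (t - k) ^ 2) : ℝ) : ℂ) = √b * jacobiTheta₂ t (I * b) := by
  have hterm (n : ℤ) :
      jacobiTheta₂_term n t (I * b) = cexp (-π * b * n ^ 2 + 2 * π * (t * I) * n) := by
    rw [jacobiTheta₂_term]
    congr 1
    ring_nf
    rw [I_sq]
    ring
  have hsqrt : (b : ℂ) ^ (1 / 2 : ℂ) = √b := by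
    rw [sqrt_eq_rpow, ofReal_cpow hb.le]
    norm_num
  have hpoisson := tsum_exp_neg_quadratic (by simpa using hb : 0 < (b : ℂ).re) (t * I)
  rw [jacobiTheta₂, tsum_congr hterm, hpoisson, hsqrt, ← mul_assoc,
    mul_one_div_cancel (ofReal_ne_zero.2 (sqrt_pos.2 hb).ne'), one_mul, ofReal_tsum]
  refine tsum_congr fun k => ?_
  rw [ofReal_exp]
  congr 1
  ring_nf
  rw [I_sq]
  push_cast
  ring

theorem norm_jacobiTheta₂_ofReal_le (x : ℝ) (τ : ℂ) :
    ‖jacobiTheta₂ x τ‖ ≤ ∑' n : ℤ, rexp (-π * n ^ 2 * τ.im) := by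
  have hnorm (n : ℤ) : ‖jacobiTheta₂_term n x τ‖ = rexp (-π * n ^ 2 * τ.im) := by
    simp [norm_jacobiTheta₂_term]
  rcases le_or_gt τ.im 0 with hτ | hτ
  · rw [jacobiTheta₂_undef _ hτ, norm_zero]
    exact tsum_nonneg fun n => (exp_pos _).le
  · simp_rw [← hnorm]
    exact norm_tsum_le_tsum_norm ((summable_jacobiTheta₂_term_iff _ _).2 hτ).norm

/-- For every `b > 0` and every `t ∈ ℝ`, the periodization of the Gaussian
`exp (-(π/b)(t-k)²)` over `k ∈ ℤ` is bounded by `√b · θ₃(0, e^{-bπ})`,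
where `θ₃(0,q) = Σ_{k∈ℤ} q^{k²}`. -/
theorem gaussian_periodization_le_sqrt_mul_theta (b : ℝ) (hb : 0 < b) (t : ℝ) :
    ∑' k : ℤ, Real.exp (-(π / b) * (t - (k : ℝ)) ^ 2) ≤
      Real.sqrt b * ∑' k : ℤ, Real.exp (-(b * π) * (k : ℝ) ^ 2) := by
  have hnonneg : 0 ≤ ∑' k : ℤ, rexp (-(π / b) * (t - k) ^ 2) :=
    tsum_nonneg fun k => (exp_pos _).le
  calc ∑' k : ℤ, rexp (-(π / b) * (t - k) ^ 2)
      = ‖((∑' k : ℤ, rexp (-(π / b) * (t - k) ^ 2) : ℝ) : ℂ)‖ := by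
        rw [Complex.norm_real, norm_of_nonneg hnonneg]
    _ = √b * ‖jacobiTheta₂ t (Complex.I * b)‖ := by
        rw [ofReal_tsum_exp_neg_div_mul_sub_sq hb, norm_mul, Complex.norm_real,
          norm_of_nonneg (sqrt_nonneg b)]
    _ ≤ √b * ∑' k : ℤ, rexp (-(b * π) * k ^ 2) := by
        gcongr
        refine (norm_jacobiTheta₂_ofReal_le t _).trans_eq (tsum_congr fun k => ?_)
        simp only [Complex.mul_im, Complex.I_re, Complex.I_im, Complex.ofReal_re,
          Complex.ofReal_im]
        ring_nf
end

section
/- For every r > 0, every z ∈ ℝ², and every f ∈ L²(ℝ), the Gabor transform satisfies |𝒢f(z)| ≤ (√(e^{πr²} − 1)/(πr²)) · ‖𝒢f‖_{L²(B_r(z))}. -/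
open Real MeasureTheory

/-- The Gabor transform (short-time Fourier transform with Gaussian window):
`𝒢f(x,ω) = 2^{1/4} ∫ f(t) e^{-π(t-x)²} e^{-2πiωt} dt`. -/
noncomputable def gabor (f : ℝ → ℂ) (x ω : ℝ) : ℂ :=
  ((2 ^ ((1 : ℝ) / 4) : ℝ) : ℂ) *
    ∫ t : ℝ, f t * Complex.exp (-(π : ℂ) * ((t : ℂ) - (x : ℂ)) ^ 2) *
      Complex.exp (-2 * (π : ℂ) * Complex.I * (ω : ℂ) * (t : ℂ))

/-!
Writing `w = x - iy`, one has `|𝒢f(x,y)|² = |Bf(w)|² e^{-π|w|²}` with `Bf` the Bargmann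
transform of `f`, an entire function. Multiplying `Bf` by `e^{π|c|²/2 - π c̄ w}` moves the Gaussian
weight from `0` to `c`; the mean value property of the square of this entire function on the
circles about `c`, integrated in polar coordinates against `e^{-πs²} s ds`, then gives
`(1 - e^{-πr²}) |𝒢f(c)|² ≤ ∫_{B_r(c)} |𝒢f|²`. The constant of the theorem follows from
`t² ≤ (e^t - 1)(1 - e^{-t}) = 4 sinh²(t/2)` at `t = πr²`.
-/

open Set Metric

section

variable {E : Type*} [NormedAddCommGroup E] [NormedSpace ℝ E]

theorem setIntegral_disc_eq_setIntegral_ball (g : ℂ → E) (z : ℝ × ℝ) {r : ℝ} (hr : 0 ≤ r) :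
    ∫ p in {p : ℝ × ℝ | (p.1 - z.1) ^ 2 + (p.2 - z.2) ^ 2 < r ^ 2}, g (p.1 - p.2 * Complex.I)
      = ∫ w in ball (z.1 - z.2 * Complex.I) r, g w := by
  set Φ : ℝ × ℝ → ℂ := fun p => Complex.conjLIE (Complex.measurableEquivRealProd.symm p)
  have hΦ : ∀ p, Φ p = p.1 - p.2 * Complex.I := fun p => by apply Complex.ext <;> simp [Φ]
  have hmp : MeasurePreserving Φ :=
    Complex.conjLIE.measurePreserving.comp Complex.volume_preserving_equiv_real_prod.symm
  have hemb : MeasurableEmbedding Φ := Complex.conjLIE.toHomeomorph.measurableEmbedding.comp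
    Complex.measurableEquivRealProd.symm.measurableEmbedding
  have hpre : Φ ⁻¹' ball (Φ z) r = {p | (p.1 - z.1) ^ 2 + (p.2 - z.2) ^ 2 < r ^ 2} := by
    ext p
    have hdiff : Φ p - Φ z = (p.1 - z.1 : ℝ) + (-(p.2 - z.2) : ℝ) * Complex.I := by
      rw [hΦ, hΦ]; push_cast; ring
    rw [mem_preimage, mem_ball, dist_eq_norm, ← sq_lt_sq₀ (norm_nonneg _) hr, Complex.sq_norm,
      hdiff, Complex.normSq_add_mul_I, neg_sq, mem_ofPred_eq]
  rw [← hΦ z, ← hpre, ← hmp.setIntegral_preimage_emb hemb]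
  simp only [hΦ]

theorem polarCoord_symm_eq_circleMap (p : ℝ × ℝ) :
    Complex.polarCoord.symm p = circleMap 0 p.1 p.2 := by
  simp [circleMap_zero, Complex.exp_mul_I, Complex.ofReal_cos, Complex.ofReal_sin]

theorem integral_circleMap_eq_two_pi_smul_circleAverage (g : ℂ → E) (c : ℂ) (s : ℝ) :
    ∫ θ in Ioo (-π) π, g (circleMap c s θ) = (2 * π) • circleAverage g c s := by
  have hper : Function.Periodic (fun θ => g (circleMap c s θ)) (2 * π) := fun θ => by
    simp [periodic_circleMap c s θ]
  rw [circleAverage_def, smul_inv_smul₀ (by positivity), ← integral_Ioc_eq_integral_Ioo,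
    ← intervalIntegral.integral_of_le (by linarith [pi_pos])]
  simpa [show -π + 2 * π = π by ring] using hper.intervalIntegral_add_eq (-π) 0

theorem integral_ball_eq_intervalIntegral_circleAverage {g : ℂ → E} (hg : Continuous g) (c : ℂ)
    {r : ℝ} (hr : 0 ≤ r) :
    ∫ w in ball c r, g w = ∫ s in 0..r, (2 * π * s) • circleAverage g c s := by
  set S : Set (ℝ × ℝ) := Ioo 0 r ×ˢ Ioo (-π) π
  have hS : S ⊆ polarCoord.target := prod_mono Ioo_subset_Ioi_self subset_rfl
  have hpolar : ∀ p ∈ polarCoord.target, p.1 • (ball 0 r).indicator (fun w => g (w + c))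
      (Complex.polarCoord.symm p) = S.indicator (fun p => p.1 • g (circleMap c p.1 p.2)) p := by
    rintro ⟨s, θ⟩ ⟨hs, hθ⟩
    have hs : 0 < s := hs
    by_cases hsr : s < r
    · rw [indicator_of_mem (by simpa [abs_of_pos hs] using hsr),
        indicator_of_mem (show (s, θ) ∈ S from ⟨⟨hs, hsr⟩, hθ⟩), polarCoord_symm_eq_circleMap]
      simp [circleMap, add_comm]
    · rw [indicator_of_notMem (by simpa [abs_of_pos hs] using hsr),
        indicator_of_notMem (fun h => hsr h.1.2), smul_zero]
  have hint : IntegrableOn (fun p : ℝ × ℝ => p.1 • g (circleMap c p.1 p.2)) S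
      (volume.prod volume) :=
    ((by fun_prop : Continuous fun p : ℝ × ℝ => p.1 • g (circleMap c p.1 p.2)).continuousOn
      |>.integrableOn_compact (isCompact_Icc.prod isCompact_Icc)).mono_set
      (prod_mono Ioo_subset_Icc_self Ioo_subset_Icc_self)
  calc ∫ w in ball c r, g w = ∫ w in ball 0 r, g (w + c) := by
        rw [← (measurePreserving_add_right volume c).setIntegral_preimage_emb
          (measurableEmbedding_addRight c), preimage_add_right_ball, sub_self]
    _ = ∫ p in S, p.1 • g (circleMap c p.1 p.2) := by
        rw [← integral_indicator measurableSet_ball, ← Complex.integral_comp_polarCoord_symm,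
          setIntegral_congr_fun polarCoord.open_target.measurableSet hpolar,
          setIntegral_indicator (measurableSet_Ioo.prod measurableSet_Ioo),
          inter_eq_self_of_subset_right hS]
    _ = ∫ s in Ioo 0 r, ∫ θ in Ioo (-π) π, s • g (circleMap c s θ) := by
        rw [Measure.volume_eq_prod, setIntegral_prod _ hint]
    _ = ∫ s in 0..r, (2 * π * s) • circleAverage g c s := by
        rw [intervalIntegral.integral_of_le hr, integral_Ioc_eq_integral_Ioo]
        refine setIntegral_congr_fun measurableSet_Ioo fun s _ => ?_
        rw [integral_smul, integral_circleMap_eq_two_pi_smul_circleAverage, smul_smul, mul_comm s]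

theorem norm_circleAverage_le (f : ℂ → E) (c : ℂ) (R : ℝ) :
    ‖circleAverage f c R‖ ≤ circleAverage (fun w => ‖f w‖) c R := by
  rw [circleAverage_def, circleAverage_def, norm_smul, smul_eq_mul,
    norm_of_nonneg (by positivity)]
  gcongr
  exact intervalIntegral.norm_integral_le_integral_norm two_pi_pos.le

theorem circleAverage_comp_norm_sub [CompleteSpace E] (ρ : ℝ → E) (c : ℂ) {s : ℝ} (hs : 0 ≤ s) :
    circleAverage (fun w => ρ ‖w - c‖) c s = ρ s :=
  circleAverage_const_on_circle fun w hw => by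
    rw [← dist_eq_norm, mem_sphere.1 hw, abs_of_nonneg hs]

end

theorem sq_norm_le_circleAverage_sq_norm {H : ℂ → ℂ} (hH : Differentiable ℂ H) (c : ℂ) (R : ℝ) :
    ‖H c‖ ^ 2 ≤ circleAverage (fun w => ‖H w‖ ^ 2) c R := by
  have hmean : circleAverage (fun w => H w ^ 2) c R = H c ^ 2 :=
    (hH.pow 2).diffContOnCl.circleAverage
  have h := norm_circleAverage_le (fun w => H w ^ 2) c R
  simpa only [hmean, norm_pow] using h

theorem sq_norm_mul_integral_ball_le {H : ℂ → ℂ} (hH : Differentiable ℂ H) {ρ : ℝ → ℝ}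
    (hρ : Continuous ρ) (hρ_nonneg : ∀ s, 0 ≤ ρ s) (c : ℂ) {r : ℝ} (hr : 0 ≤ r) :
    ‖H c‖ ^ 2 * ∫ w in ball c r, ρ ‖w - c‖ ≤ ∫ w in ball c r, ‖H w‖ ^ 2 * ρ ‖w - c‖ := by
  have hHc := hH.continuous
  rw [integral_ball_eq_intervalIntegral_circleAverage (by fun_prop) c hr,
    integral_ball_eq_intervalIntegral_circleAverage (by fun_prop) c hr,
    ← intervalIntegral.integral_const_mul]
  refine intervalIntegral.integral_mono_on hr (Continuous.intervalIntegrable (by fun_prop) 0 r)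
    (Continuous.intervalIntegrable (by fun_prop) 0 r) fun s hs => ?_
  have hweight : circleAverage (fun w => ‖H w‖ ^ 2 * ρ ‖w - c‖) c s
      = ρ s * circleAverage (fun w => ‖H w‖ ^ 2) c s := by
    rw [← smul_eq_mul, ← circleAverage_fun_smul]
    refine circleAverage_congr_sphere fun w hw => ?_
    simp only [smul_eq_mul]
    rw [← dist_eq_norm, mem_sphere.1 hw, abs_of_nonneg hs.1, mul_comm]
  have hcoeff : 0 ≤ 2 * π * s * ρ s := mul_nonneg (by have := hs.1; positivity) (hρ_nonneg s)
  rw [circleAverage_comp_norm_sub ρ c hs.1, hweight, smul_eq_mul, smul_eq_mul]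
  calc ‖H c‖ ^ 2 * (2 * π * s * ρ s) = 2 * π * s * ρ s * ‖H c‖ ^ 2 := by ring
    _ ≤ 2 * π * s * ρ s * circleAverage (fun w => ‖H w‖ ^ 2) c s :=
        mul_le_mul_of_nonneg_left (sq_norm_le_circleAverage_sq_norm hH c s) hcoeff
    _ = _ := by ring

theorem integral_ball_exp_neg_pi_mul_sq_norm_sub (c : ℂ) {r : ℝ} (hr : 0 ≤ r) :
    ∫ w in ball c r, exp (-π * ‖w - c‖ ^ 2) = 1 - exp (-π * r ^ 2) := by
  have hderiv : ∀ s ∈ uIcc 0 r, HasDerivAt (fun s => -exp (-π * s ^ 2))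
      (2 * π * s * exp (-π * s ^ 2)) s := fun s _ =>
    (((hasDerivAt_pow 2 s).const_mul (-π)).exp.neg).congr_deriv (by push_cast; ring)
  rw [integral_ball_eq_intervalIntegral_circleAverage (by fun_prop) c hr,
    intervalIntegral.integral_congr (g := fun s => 2 * π * s * exp (-π * s ^ 2)) fun s hs => by
      rw [uIcc_of_le hr] at hs
      rw [circleAverage_comp_norm_sub (fun s => exp (-π * s ^ 2)) c hs.1, smul_eq_mul],
    intervalIntegral.integral_eq_sub_of_hasDerivAt hderiv
      (Continuous.intervalIntegrable (by fun_prop) 0 r)]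
  simp only [ne_eq, OfNat.ofNat_ne_zero, not_false_eq_true, zero_pow, mul_zero, exp_zero]
  ring

theorem sq_norm_mul_cexp_mul_exp_neg_pi_mul_sq_norm_sub (G : ℂ → ℂ) (c w : ℂ) :
    ‖G w * Complex.exp ((π * ‖c‖ ^ 2 / 2 : ℝ) - π * (starRingEnd ℂ) c * w)‖ ^ 2
        * exp (-π * ‖w - c‖ ^ 2) = ‖G w‖ ^ 2 * exp (-π * ‖w‖ ^ 2) := by
  rw [norm_mul, mul_pow, Complex.norm_exp, mul_assoc, ← exp_nat_mul, ← exp_add]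
  congr 2
  simp only [Complex.sq_norm, Complex.normSq_apply, Complex.mul_re, Complex.sub_re,
    Complex.sub_im, Complex.conj_re, Complex.conj_im, Complex.ofReal_re, Complex.ofReal_im,
    Complex.mul_im]
  ring

theorem one_sub_exp_mul_sq_norm_mul_exp_le_integral_ball {G : ℂ → ℂ} (hG : Differentiable ℂ G)
    (c : ℂ) {r : ℝ} (hr : 0 ≤ r) :
    (1 - exp (-π * r ^ 2)) * (‖G c‖ ^ 2 * exp (-π * ‖c‖ ^ 2))
      ≤ ∫ w in ball c r, ‖G w‖ ^ 2 * exp (-π * ‖w‖ ^ 2) := by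
  set H : ℂ → ℂ := fun w => G w * Complex.exp ((π * ‖c‖ ^ 2 / 2 : ℝ) - π * (starRingEnd ℂ) c * w)
  have hH : Differentiable ℂ H := hG.mul (by fun_prop)
  have hHc : ‖H c‖ ^ 2 = ‖G c‖ ^ 2 * exp (-π * ‖c‖ ^ 2) := by
    simpa [H] using sq_norm_mul_cexp_mul_exp_neg_pi_mul_sq_norm_sub G c c
  calc (1 - exp (-π * r ^ 2)) * (‖G c‖ ^ 2 * exp (-π * ‖c‖ ^ 2))
      = ‖H c‖ ^ 2 * ∫ w in ball c r, exp (-π * ‖w - c‖ ^ 2) := by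
        rw [integral_ball_exp_neg_pi_mul_sq_norm_sub c hr, hHc, mul_comm]
    _ ≤ ∫ w in ball c r, ‖H w‖ ^ 2 * exp (-π * ‖w - c‖ ^ 2) :=
        sq_norm_mul_integral_ball_le hH (ρ := fun s => exp (-π * s ^ 2)) (by fun_prop)
          (fun _ => (exp_pos _).le) c hr
    _ = ∫ w in ball c r, ‖G w‖ ^ 2 * exp (-π * ‖w‖ ^ 2) := by
        simp only [H, sq_norm_mul_cexp_mul_exp_neg_pi_mul_sq_norm_sub]

theorem norm_cexp_ofReal_mul_le (z : ℂ) (t : ℝ) :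
    ‖Complex.exp (z * t)‖ ≤ exp (‖z‖ * |t|) := by
  rw [Complex.norm_exp, Complex.re_mul_ofReal, exp_le_exp]
  calc z.re * t ≤ |z.re * t| := le_abs_self _
    _ ≤ ‖z‖ * |t| := by rw [abs_mul]; gcongr; exact Complex.abs_re_le_norm z

theorem differentiable_integral_mul_cexp_mul {g : ℝ → ℂ} (hg : AEStronglyMeasurable g)
    (hint : ∀ a : ℝ, Integrable fun t => exp (a * |t|) * ‖g t‖) :
    Differentiable ℂ fun z : ℂ => ∫ t : ℝ, g t * Complex.exp (z * t) := by
  intro z₀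
  have hmeas : ∀ z : ℂ, AEStronglyMeasurable (fun t : ℝ => g t * Complex.exp (z * t)) :=
    fun z => hg.mul (by fun_prop : Continuous fun t : ℝ => Complex.exp (z * t)).aestronglyMeasurable
  have hF : Integrable fun t : ℝ => g t * Complex.exp (z₀ * t) :=
    (hint ‖z₀‖).mono' (hmeas z₀) (.of_forall fun t => by
      rw [norm_mul, mul_comm]; gcongr; exact norm_cexp_ofReal_mul_le z₀ t)
  have hF' := hasDerivAt_integral_of_dominated_loc_of_deriv_le (ball_mem_nhds z₀ one_pos)
    (.of_forall hmeas) hF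
    (F' := fun z t => g t * (Complex.exp (z * t) * t))
    (hg.mul (by fun_prop : Continuous fun t : ℝ => Complex.exp (z₀ * t) * t).aestronglyMeasurable)
    (bound := fun t => exp ((‖z₀‖ + 2) * |t|) * ‖g t‖)
    (.of_forall fun t z hz => by
      have hz : ‖z‖ ≤ ‖z₀‖ + 1 := by
        have := norm_le_norm_add_norm_sub' z z₀; rw [mem_ball, dist_eq_norm] at hz; linarith
      rw [norm_mul, norm_mul, Complex.norm_real, norm_eq_abs, mul_comm]
      calc ‖Complex.exp (z * t)‖ * |t| * ‖g t‖
          ≤ exp ((‖z₀‖ + 1) * |t|) * exp |t| * ‖g t‖ := by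
            gcongr
            · exact (norm_cexp_ofReal_mul_le z t).trans (by gcongr)
            · linarith [add_one_le_exp |t|]
        _ = exp ((‖z₀‖ + 2) * |t|) * ‖g t‖ := by rw [← exp_add]; ring_nf)
    (hint _)
    (.of_forall fun t z _ => by
      simpa using ((hasDerivAt_id z).mul_const (t : ℂ)).cexp.const_mul (g t))
  exact hF'.2.differentiableAt

theorem memLp_two_exp_neg_mul_sq {b : ℝ} (hb : 0 < b) :
    MemLp (fun t : ℝ => exp (-b * t ^ 2)) 2 := by
  refine (memLp_two_iff_integrable_sq (by fun_prop)).2 ?_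
  refine (integrable_exp_neg_mul_sq (by positivity : 0 < 2 * b)).congr (.of_forall fun t => ?_)
  simp only [← exp_nat_mul]; push_cast; ring_nf

theorem mul_abs_sub_mul_sq_le (a : ℝ) {b : ℝ} (hb : 0 < b) (t : ℝ) :
    a * |t| - b * t ^ 2 ≤ a ^ 2 / (2 * b) - b / 2 * t ^ 2 := by
  have key : 0 ≤ (a - b * |t|) ^ 2 / (2 * b) := by positivity
  have ht : |t| ^ 2 = t ^ 2 := sq_abs t
  field_simp at key ⊢
  nlinarith

theorem integrable_exp_mul_abs_mul_norm_mul_cexp_neg_mul_sq {f : ℝ → ℂ} (hf : MemLp f 2)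
    {b : ℝ} (hb : 0 < b) (a : ℝ) :
    Integrable fun t : ℝ => exp (a * |t|) * ‖f t * Complex.exp (-b * t ^ 2)‖ := by
  have hmaj : Integrable fun t => ‖f t‖ * exp (-(b / 2) * t ^ 2) :=
    hf.norm.integrable_mul (memLp_two_exp_neg_mul_sq (by positivity))
  refine (hmaj.const_mul (exp (a ^ 2 / (2 * b)))).mono'
    (by have := hf.1; fun_prop) (.of_forall fun t => ?_)
  have hnorm : ‖Complex.exp (-b * t ^ 2)‖ = exp (-b * t ^ 2) := by
    rw [Complex.norm_exp]; norm_cast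
  rw [norm_mul, norm_norm, norm_mul, hnorm, norm_of_nonneg (exp_pos _).le]
  calc exp (a * |t|) * (‖f t‖ * exp (-b * t ^ 2))
      = ‖f t‖ * exp (a * |t| - b * t ^ 2) := by rw [sub_eq_add_neg, exp_add]; ring_nf
    _ ≤ ‖f t‖ * exp (a ^ 2 / (2 * b) - b / 2 * t ^ 2) := by
        gcongr ‖f t‖ * exp ?_; exact mul_abs_sub_mul_sq_le a hb t
    _ = exp (a ^ 2 / (2 * b)) * (‖f t‖ * exp (-(b / 2) * t ^ 2)) := by
        rw [sub_eq_add_neg, exp_add]; ring_nf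

/-- The Bargmann transform `2^{1/4} ∫ f(t) e^{2πtz - πt² - πz²/2} dt`, with `e^{-πz²/2}` taken
out of the integral. -/
noncomputable def bargmann (f : ℝ → ℂ) (z : ℂ) : ℂ :=
  ((2 ^ ((1 : ℝ) / 4) : ℝ) : ℂ) * Complex.exp (-π * z ^ 2 / 2) *
    ∫ t : ℝ, f t * Complex.exp (-π * t ^ 2) * Complex.exp (2 * π * z * t)

theorem differentiable_bargmann {f : ℝ → ℂ} (hf : MemLp f 2) : Differentiable ℂ (bargmann f) :=
  ((differentiable_const _).mul (by fun_prop)).mul <|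
    (differentiable_integral_mul_cexp_mul (by have := hf.1; fun_prop)
      (integrable_exp_mul_abs_mul_norm_mul_cexp_neg_mul_sq hf pi_pos)).comp
      (differentiable_id.const_mul _)

theorem gabor_eq_bargmann (f : ℝ → ℂ) (x y : ℝ) :
    gabor f x y = Complex.exp ((-π * x * y : ℝ) * Complex.I) *
      ((exp (-π * (x ^ 2 + y ^ 2) / 2) : ℝ) : ℂ) * bargmann f (x - y * Complex.I) := by
  rw [gabor, bargmann, ← integral_const_mul, ← integral_const_mul, ← integral_const_mul]
  congr 1 with t
  have hexp : Complex.exp (-π * (t - x) ^ 2) * Complex.exp (-2 * π * Complex.I * y * t) =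
      Complex.exp ((-π * x * y : ℝ) * Complex.I) * ((exp (-π * (x ^ 2 + y ^ 2) / 2) : ℝ) : ℂ) *
        Complex.exp (-π * (x - y * Complex.I) ^ 2 / 2) *
        (Complex.exp (-π * t ^ 2) * Complex.exp (2 * π * (x - y * Complex.I) * t)) := by
    simp only [← Complex.exp_add, Complex.ofReal_exp]
    congr 1
    push_cast
    linear_combination (π * y ^ 2 / 2 : ℂ) * Complex.I_sq
  rw [mul_assoc (f t), hexp]
  ring

theorem sq_norm_gabor (f : ℝ → ℂ) (x y : ℝ) :
    ‖gabor f x y‖ ^ 2 =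
      ‖bargmann f (x - y * Complex.I)‖ ^ 2 * exp (-π * ‖(x : ℂ) - y * Complex.I‖ ^ 2) := by
  have hnorm : ‖(x : ℂ) - y * Complex.I‖ ^ 2 = x ^ 2 + y ^ 2 := by
    rw [Complex.sq_norm, show (x : ℂ) - y * Complex.I = x + (-y : ℝ) * Complex.I by push_cast; ring,
      Complex.normSq_add_mul_I, neg_sq]
  rw [gabor_eq_bargmann, norm_mul, norm_mul, Complex.norm_exp_ofReal_mul_I,
    Complex.norm_of_nonneg (exp_pos _).le, hnorm, one_mul, mul_pow, ← exp_nat_mul, mul_comm]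
  push_cast; ring_nf

theorem sq_le_exp_sub_one_mul_one_sub_exp_neg {t : ℝ} (ht : 0 ≤ t) :
    t ^ 2 ≤ (exp t - 1) * (1 - exp (-t)) := by
  have hsinh : t / 2 ≤ sinh (t / 2) := self_le_sinh_iff.2 (by linarith)
  have hhalf : exp (t / 2) * exp (-(t / 2)) = 1 := by rw [← exp_add]; simp
  have hid : (exp t - 1) * (1 - exp (-t)) = (2 * sinh (t / 2)) ^ 2 := by
    rw [sinh_eq, ← add_halves t, neg_add, exp_add, exp_add, add_halves]
    linear_combination (1 - exp (t / 2) * exp (-(t / 2))) * hhalf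
  nlinarith

theorem le_sqrt_exp_sub_one_div_mul_sqrt {t a b : ℝ} (ht : 0 < t)
    (h : (1 - exp (-t)) * a ^ 2 ≤ b) : a ≤ √(exp t - 1) / t * √b := by
  have hexp : 0 ≤ exp t - 1 := by linarith [one_le_exp ht.le]
  have hsq : (a * t) ^ 2 ≤ (exp t - 1) * b := by
    calc (a * t) ^ 2 = t ^ 2 * a ^ 2 := by ring
      _ ≤ (exp t - 1) * (1 - exp (-t)) * a ^ 2 := by
          gcongr; exact sq_le_exp_sub_one_mul_one_sub_exp_neg ht.le
      _ ≤ (exp t - 1) * b := by rw [mul_assoc]; gcongr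
  rw [div_mul_eq_mul_div, le_div_iff₀ ht, ← sqrt_mul hexp]
  exact (le_abs_self _).trans (abs_le_sqrt hsq)

/-- Pointwise bound for the Gabor transform by its local `L²` mass:
`|𝒢f(z)| ≤ (√(e^{πr²} − 1)/(πr²)) · ‖𝒢f‖_{L²(B_r(z))}` for all `r > 0`,
`z ∈ ℝ²` and `f ∈ L²(ℝ)`, where `B_r(z)` is the Euclidean ball in `ℝ²`. -/
theorem gabor_pointwise_le_local_L2 (f : ℝ → ℂ) (hf : MemLp f 2 volume)
    (r : ℝ) (hr : 0 < r) (z : ℝ × ℝ) :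
    ‖gabor f z.1 z.2‖ ≤
      Real.sqrt (Real.exp (π * r ^ 2) - 1) / (π * r ^ 2) *
        Real.sqrt
          (∫ w in {w : ℝ × ℝ | (w.1 - z.1) ^ 2 + (w.2 - z.2) ^ 2 < r ^ 2},
            ‖gabor f w.1 w.2‖ ^ 2) := by
  have hlocal := one_sub_exp_mul_sq_norm_mul_exp_le_integral_ball (differentiable_bargmann hf)
    (z.1 - z.2 * Complex.I) hr.le
  rw [← setIntegral_disc_eq_setIntegral_ball
    (fun w => ‖bargmann f w‖ ^ 2 * exp (-π * ‖w‖ ^ 2)) z hr.le] at hlocal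
  simp only [← sq_norm_gabor] at hlocal
  exact le_sqrt_exp_sub_one_div_mul_sqrt (by positivity) (by rwa [← neg_mul])
end

section
/- Let s > 0 and g(x) = e^{-2πx²}. Then the family (T_{sℓ}g)_{ℓ∈ℤ} of translates is a Bessel sequence in L²(ℝ) with Bessel bound θ₃(0, e^{-πs²})/2, i.e. Σ_{ℓ∈ℤ} |⟨f, T_{sℓ}g⟩|² ≤ (θ₃(0, e^{-πs²})/2)‖f‖²_{L²} for all f ∈ L²(ℝ). -/
/-!
The Gram matrix of the translates is `⟪T_{sk}g, T_{sℓ}g⟫ = e^{-πs²(k-ℓ)²}/2`, so every row of it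
has absolute sum at most `θ₃(0, e^{-πs²})/2`. Schur's test turns such a row bound `B` into a
Bessel bound: for `c_ℓ = ⟪T_{sℓ}g, f⟫` and `y = Σ c_ℓ T_{sℓ}g` one has `Σ |c_ℓ|² = ⟪y, f⟫ ≤ ‖y‖ ‖f‖`,
while expanding `‖y‖²` and using `|c_k c_ℓ| ≤ (|c_k|² + |c_ℓ|²)/2` gives `‖y‖² ≤ B Σ |c_ℓ|²`.
-/

open Real MeasureTheory Finset
open scoped InnerProductSpace

section SchurTest

variable {ι : Type*}

theorem sum_sum_mul_mul_le_of_row_sum_le (u : Finset ι) (a : ι → ℝ) {M : ι → ι → ℝ} {B : ℝ}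
    (hM : ∀ k ℓ, 0 ≤ M k ℓ) (hsymm : ∀ k ℓ, M k ℓ = M ℓ k) (hrow : ∀ k, ∑ ℓ ∈ u, M k ℓ ≤ B) :
    ∑ k ∈ u, ∑ ℓ ∈ u, a k * a ℓ * M k ℓ ≤ B * ∑ k ∈ u, a k ^ 2 := by
  have hswap : ∑ k ∈ u, ∑ ℓ ∈ u, a ℓ ^ 2 * M k ℓ = ∑ k ∈ u, ∑ ℓ ∈ u, a k ^ 2 * M k ℓ := by
    rw [Finset.sum_comm]
    exact sum_congr rfl fun k _ => sum_congr rfl fun ℓ _ => by rw [hsymm]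
  calc ∑ k ∈ u, ∑ ℓ ∈ u, a k * a ℓ * M k ℓ
      ≤ ∑ k ∈ u, ∑ ℓ ∈ u, (a k ^ 2 * M k ℓ + a ℓ ^ 2 * M k ℓ) / 2 :=
        sum_le_sum fun k _ => sum_le_sum fun ℓ _ => by
          nlinarith [mul_nonneg (sq_nonneg (a k - a ℓ)) (hM k ℓ)]
    _ = ∑ k ∈ u, a k ^ 2 * ∑ ℓ ∈ u, M k ℓ := by
        simp only [← sum_div, sum_add_distrib, hswap, mul_sum]
        ring
    _ ≤ ∑ k ∈ u, a k ^ 2 * B := sum_le_sum fun k _ => by gcongr; exact hrow k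
    _ = B * ∑ k ∈ u, a k ^ 2 := by rw [← sum_mul, mul_comm]

variable {𝕜 E : Type*} [RCLike 𝕜] [NormedAddCommGroup E] [InnerProductSpace 𝕜 E]

theorem norm_sum_smul_sq_le (u : Finset ι) (c : ι → 𝕜) (v : ι → E) :
    ‖∑ ℓ ∈ u, c ℓ • v ℓ‖ ^ 2 ≤ ∑ k ∈ u, ∑ ℓ ∈ u, ‖c k‖ * ‖c ℓ‖ * ‖⟪v k, v ℓ⟫_𝕜‖ := by
  have hexpand : ⟪∑ ℓ ∈ u, c ℓ • v ℓ, ∑ ℓ ∈ u, c ℓ • v ℓ⟫_𝕜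
      = ∑ k ∈ u, ∑ ℓ ∈ u, starRingEnd 𝕜 (c k) * c ℓ * ⟪v k, v ℓ⟫_𝕜 := by
    rw [sum_inner]
    simp only [inner_sum, inner_smul_left, inner_smul_right]
    exact sum_congr rfl fun k _ => sum_congr rfl fun ℓ _ => by ring
  calc ‖∑ ℓ ∈ u, c ℓ • v ℓ‖ ^ 2 = ‖⟪∑ ℓ ∈ u, c ℓ • v ℓ, ∑ ℓ ∈ u, c ℓ • v ℓ⟫_𝕜‖ := by
        rw [inner_self_eq_norm_sq_to_K, norm_pow, RCLike.norm_ofReal, abs_norm]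
    _ ≤ ∑ k ∈ u, ∑ ℓ ∈ u, ‖starRingEnd 𝕜 (c k) * c ℓ * ⟪v k, v ℓ⟫_𝕜‖ := by
        rw [hexpand]
        exact (norm_sum_le _ _).trans (sum_le_sum fun k _ => norm_sum_le _ _)
    _ = ∑ k ∈ u, ∑ ℓ ∈ u, ‖c k‖ * ‖c ℓ‖ * ‖⟪v k, v ℓ⟫_𝕜‖ := by
        simp only [norm_mul, RCLike.norm_conj]

theorem sum_norm_inner_sq_le_of_row_sum_le [Nonempty ι] (v : ι → E) {B : ℝ}
    (hrow : ∀ k (u : Finset ι), ∑ ℓ ∈ u, ‖⟪v k, v ℓ⟫_𝕜‖ ≤ B) (x : E) (u : Finset ι) :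
    ∑ ℓ ∈ u, ‖⟪v ℓ, x⟫_𝕜‖ ^ 2 ≤ B * ‖x‖ ^ 2 := by
  set P := ∑ ℓ ∈ u, ‖⟪v ℓ, x⟫_𝕜‖ ^ 2
  set y := ∑ ℓ ∈ u, ⟪v ℓ, x⟫_𝕜 • v ℓ
  have hP : 0 ≤ P := by positivity
  have hB : 0 ≤ B := by simpa using hrow (Classical.arbitrary _) ∅
  have hy : ‖y‖ ^ 2 ≤ B * P :=
    (norm_sum_smul_sq_le u _ v).trans <| sum_sum_mul_mul_le_of_row_sum_le u _
      (fun _ _ => norm_nonneg _) (fun k ℓ => norm_inner_symm _ _) (hrow · u)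
  have hyx : P ≤ ‖y‖ * ‖x‖ := by
    have hinner : ⟪y, x⟫_𝕜 = (P : 𝕜) := by
      simp only [y, P, sum_inner, inner_smul_left, RCLike.conj_mul]
      push_cast; rfl
    calc P = ‖⟪y, x⟫_𝕜‖ := by rw [hinner, RCLike.norm_ofReal, abs_of_nonneg hP]
      _ ≤ ‖y‖ * ‖x‖ := norm_inner_le_norm _ _
  have hPP : P * P ≤ B * ‖x‖ ^ 2 * P := by
    calc P * P ≤ ‖y‖ ^ 2 * ‖x‖ ^ 2 := by nlinarith
      _ ≤ B * P * ‖x‖ ^ 2 := by gcongr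
      _ = B * ‖x‖ ^ 2 * P := by ring
  rcases hP.eq_or_lt with hP0 | hP0
  · rw [← hP0]; positivity
  · exact le_of_mul_le_mul_right hPP hP0

theorem tsum_norm_inner_sq_le_of_row_sum_le [Nonempty ι] (v : ι → E) {B : ℝ}
    (hrow : ∀ k (u : Finset ι), ∑ ℓ ∈ u, ‖⟪v k, v ℓ⟫_𝕜‖ ≤ B) (x : E) :
    ∑' ℓ, ‖⟪v ℓ, x⟫_𝕜‖ ^ 2 ≤ B * ‖x‖ ^ 2 :=
  Real.tsum_le_of_sum_le (fun _ => by positivity) (sum_norm_inner_sq_le_of_row_sum_le v hrow x)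

end SchurTest

namespace MeasureTheory.MemLp

variable {α E : Type*} [MeasurableSpace α] {μ : Measure α} [NormedAddCommGroup E] {f g : α → E}

theorem norm_toLp_sq (hf : MemLp f 2 μ) : ‖hf.toLp f‖ ^ 2 = ∫ a, ‖f a‖ ^ 2 ∂μ := by
  have hint : 0 ≤ ∫ a, ‖f a‖ ^ 2 ∂μ := integral_nonneg fun _ => by positivity
  rw [Lp.norm_toLp, hf.eLpNorm_eq_integral_rpow_norm two_ne_zero ENNReal.ofNat_ne_top,
    ENNReal.toReal_ofReal (by positivity)]
  simp only [ENNReal.toReal_ofNat, Real.rpow_ofNat]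
  exact Real.rpow_inv_natCast_pow (n := 2) hint two_ne_zero

variable {𝕜 : Type*} [RCLike 𝕜] [InnerProductSpace 𝕜 E]

theorem inner_toLp_toLp (hf : MemLp f 2 μ) (hg : MemLp g 2 μ) :
    ⟪hf.toLp f, hg.toLp g⟫_𝕜 = ∫ a, ⟪f a, g a⟫_𝕜 ∂μ := by
  rw [L2.inner_def]
  refine integral_congr_ae ?_
  filter_upwards [hf.coeFn_toLp, hg.coeFn_toLp] with a hfa hga
  rw [hfa, hga]

end MeasureTheory.MemLp

theorem sum_comp_sub_le_tsum {G : Type*} [AddGroup G] {F : G → ℝ} (hF : Summable F)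
    (hF0 : ∀ m, 0 ≤ F m) (k : G) (u : Finset G) : ∑ ℓ ∈ u, F (k - ℓ) ≤ ∑' m, F m := by
  rw [← (Equiv.subLeft k).tsum_eq F]
  exact ((Equiv.subLeft k).summable_iff.mpr hF).sum_le_tsum u fun ℓ _ => hF0 _

theorem summable_exp_neg_mul_int_sq {c : ℝ} (hc : 0 < c) :
    Summable fun k : ℤ => exp (-c * (k : ℝ) ^ 2) := by
  have hnat : Summable fun n : ℕ => exp (-c * (n : ℝ) ^ 2) :=
    summable_exp_nat_mul_of_ge (neg_lt_zero.mpr hc) fun n => by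
      exact_mod_cast Nat.le_self_pow two_ne_zero n
  exact .of_nat_of_neg (by simpa using hnat) (by simpa using hnat)

noncomputable def gaussianTranslate (a : ℝ) : ℝ → ℂ := fun t => (exp (-2 * π * (t - a) ^ 2) : ℝ)

theorem memLp_gaussianTranslate (a : ℝ) : MemLp (gaussianTranslate a) 2 volume := by
  have hcont : Continuous (gaussianTranslate a) := by unfold gaussianTranslate; fun_prop
  refine (memLp_two_iff_integrable_sq_norm hcont.aestronglyMeasurable).mpr ?_
  refine ((integrable_exp_neg_mul_sq (by positivity : 0 < 4 * π)).comp_sub_right a).congr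
    (.of_forall fun t => ?_)
  simp only [gaussianTranslate, Complex.norm_real, norm_eq_abs, abs_exp, ← exp_nat_mul]
  ring_nf

theorem integral_exp_sub_sq_mul_exp_sub_sq (a b : ℝ) :
    ∫ t, exp (-2 * π * (t - a) ^ 2) * exp (-2 * π * (t - b) ^ 2) = exp (-π * (a - b) ^ 2) / 2 := by
  have hcomplete_square : ∀ t, exp (-2 * π * (t - a) ^ 2) * exp (-2 * π * (t - b) ^ 2)
      = exp (-π * (a - b) ^ 2) * exp (-(4 * π) * (t - (a + b) / 2) ^ 2) := fun t => by
    rw [← exp_add, ← exp_add]; ring_nf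
  have hsqrt : √(π / (4 * π)) = 1 / 2 := by
    rw [show π / (4 * π) = (1 / 2) ^ 2 by field_simp; ring, sqrt_sq (by norm_num)]
  simp_rw [hcomplete_square, integral_const_mul,
    integral_sub_right_eq_self (fun t => exp (-(4 * π) * t ^ 2)), integral_gaussian, hsqrt]
  ring

theorem inner_toLp_gaussianTranslate (a b : ℝ) :
    ⟪(memLp_gaussianTranslate a).toLp _, (memLp_gaussianTranslate b).toLp _⟫_ℂ
      = ((exp (-π * (a - b) ^ 2) / 2 : ℝ) : ℂ) := by
  rw [MemLp.inner_toLp_toLp, ← integral_exp_sub_sq_mul_exp_sub_sq, ← integral_complex_ofReal]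
  simp only [gaussianTranslate, RCLike.inner_apply, Complex.conj_ofReal, Complex.ofReal_mul,
    mul_comm]

theorem inner_toLp_gaussianTranslate_toLp (a : ℝ) {f : ℝ → ℂ} (hf : MemLp f 2 volume) :
    ⟪(memLp_gaussianTranslate a).toLp _, hf.toLp f⟫_ℂ = ∫ t, f t * gaussianTranslate a t := by
  rw [MemLp.inner_toLp_toLp]
  simp only [gaussianTranslate, RCLike.inner_apply, Complex.conj_ofReal, mul_comm]

/-- The translates `(T_{sℓ}g)_{ℓ∈ℤ}` of the Gaussian `g(x) = e^{-2πx²}` form a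
Bessel sequence in `L²(ℝ)` with Bessel bound `θ₃(0, e^{-πs²})/2`, i.e.
`Σ_{ℓ∈ℤ} |⟨f, T_{sℓ}g⟩|² ≤ (θ₃(0, e^{-πs²})/2)‖f‖²_{L²}` for all `f ∈ L²(ℝ)`,
where `θ₃(0,q) = Σ_{k∈ℤ} q^{k²}`. -/
theorem gaussian_translates_bessel (s : ℝ) (hs : 0 < s) (f : ℝ → ℂ)
    (hf : MemLp f 2 volume) :
    ∑' ℓ : ℤ, ‖∫ t : ℝ, f t * ((Real.exp (-2 * π * (t - s * (ℓ : ℝ)) ^ 2) : ℝ) : ℂ)‖ ^ 2 ≤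
      ((∑' k : ℤ, Real.exp (-π * s ^ 2 * (k : ℝ) ^ 2)) / 2) * ∫ t : ℝ, ‖f t‖ ^ 2 := by
  set v : ℤ → Lp ℂ 2 (volume : Measure ℝ) := fun ℓ => (memLp_gaussianTranslate (s * ℓ)).toLp _
  have hθ : Summable fun m : ℤ => exp (-π * s ^ 2 * (m : ℝ) ^ 2) / 2 :=
    (summable_exp_neg_mul_int_sq (by positivity : 0 < π * s ^ 2)).div_const 2 |>.congr
      fun m => by ring_nf
  have hrow : ∀ k (u : Finset ℤ), ∑ ℓ ∈ u, ‖⟪v k, v ℓ⟫_ℂ‖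
      ≤ (∑' m : ℤ, exp (-π * s ^ 2 * (m : ℝ) ^ 2)) / 2 := by
    intro k u
    calc ∑ ℓ ∈ u, ‖⟪v k, v ℓ⟫_ℂ‖ = ∑ ℓ ∈ u, exp (-π * s ^ 2 * ((k - ℓ : ℤ) : ℝ) ^ 2) / 2 := by
          refine sum_congr rfl fun ℓ _ => ?_
          rw [inner_toLp_gaussianTranslate, Complex.norm_real, norm_of_nonneg (by positivity)]
          push_cast; ring_nf
      _ ≤ ∑' m : ℤ, exp (-π * s ^ 2 * (m : ℝ) ^ 2) / 2 :=
          sum_comp_sub_le_tsum hθ (fun _ => by positivity) k u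
      _ = _ := tsum_div_const
  have hbessel := tsum_norm_inner_sq_le_of_row_sum_le v hrow (hf.toLp f)
  simp only [v, inner_toLp_gaussianTranslate_toLp, hf.norm_toLp_sq] at hbessel
  exact hbessel
end
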